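/- arXiv:0711.1319 — 4 statements merged into one kernel-verified Lean document; each statement's English description precedes it below -/
import Mathlib

section
/- Let X be a right A-Galois object. Then there exists a (necessarily unique) linear functional φ_X on X such that (id ⊗ φ)(α(x)) = φ_X(x)·1 for all x ∈ X. This φ_X is faithful, i.e. if φ_X(xy) = 0 for all y ∈ X then x = 0, and if φ_X(yx) = 0 for all y ∈ X then x = 0. Moreover, if δ is the modular element of A, then φ_X is δ-invariant: (φ_X ⊗ id)(α(x)) = φ_X(x)·δ for all x ∈ X. -/
open TensorProduct

noncomputable section

variable (k : Type*) [Field k]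

/-- Apply a linear functional to the second tensor factor. -/
def applySnd {M N : Type*} [AddCommGroup M] [Module k M]
    [AddCommGroup N] [Module k N] (f : N →ₗ[k] k) : M ⊗[k] N →ₗ[k] M :=
  (TensorProduct.rid k M).toLinearMap ∘ₗ LinearMap.lTensor M f

/-- Apply a linear functional to the first tensor factor. -/
def applyFst {M N : Type*} [AddCommGroup M] [Module k M]
    [AddCommGroup N] [Module k N] (f : M →ₗ[k] k) : M ⊗[k] N →ₗ[k] N :=
  (TensorProduct.lid k N).toLinearMap ∘ₗ LinearMap.rTensor N f

variable (A X : Type*) [Ring A] [HopfAlgebra k A] [Ring X] [Algebra k X]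

/-- The Galois map `V : X ⊗ X → X ⊗ A`, `x ⊗ y ↦ (x ⊗ 1) * α y`. -/
def galoisV (α : X →ₐ[k] X ⊗[k] A) : X ⊗[k] X →ₗ[k] X ⊗[k] A :=
  LinearMap.mul' k (X ⊗[k] A) ∘ₗ
    TensorProduct.map ((TensorProduct.mk k X A).flip 1) α.toLinearMap

/-- A Hopf algebra with bijective antipode and faithful left integral `φ`,
together with a right Galois coaction `α` on `X` with trivial coinvariants. -/
structure GaloisContext where
  φ : A →ₗ[k] k
  φ_ne : φ ≠ 0
  φ_integral : ∀ a : A, applySnd k φ (Coalgebra.comul a) = φ a • (1 : A)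
  φ_faithful_left : ∀ a : A, (∀ b : A, φ (a * b) = 0) → a = 0
  φ_faithful_right : ∀ a : A, (∀ b : A, φ (b * a) = 0) → a = 0
  antipode_bijective : Function.Bijective (HopfAlgebra.antipode (R := k) (A := A))
  α : X →ₐ[k] X ⊗[k] A
  coassoc : ∀ x : X,
    TensorProduct.assoc k X A A ((LinearMap.rTensor A α.toLinearMap) (α x))
      = LinearMap.lTensor X (Coalgebra.comul (R := k) (A := A)) (α x)
  counit_id : ∀ x : X,
    applySnd k (Coalgebra.counit (R := k) (A := A)) (α x) = x
  coinv_trivial : ∀ x : X, α x = x ⊗ₜ[k] (1 : A) → ∃ c : k, x = c • (1 : X)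
  galois : Function.Bijective (galoisV k A X α)

variable {k A X}

/-- The Galois map as a linear equivalence. -/
def GaloisContext.V (G : GaloisContext k A X) : (X ⊗[k] X) ≃ₗ[k] (X ⊗[k] A) :=
  LinearEquiv.ofBijective (galoisV k A X G.α) G.galois

/-- The map `β : A → X ⊗ X`, `a ↦ V⁻¹(1 ⊗ a)`. -/
def GaloisContext.β (G : GaloisContext k A X) : A →ₗ[k] X ⊗[k] X :=
  G.V.symm.toLinearMap ∘ₗ TensorProduct.mk k X A 1

end

/-!
Put `E = (id ⊗ φ) ∘ α`. Applying `id ⊗ id ⊗ φ` to coassociativity and using left invariance of `φ`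
shows that `E x` is coinvariant, hence equal to `φ_X(x) • 1`; applying `id ⊗ φ ⊗ id` instead gives
the `δ`-invariance of `φ_X`.

For faithfulness, the Galois map `V` intertwines `id ⊗ φ_X` on `X ⊗ X` with `id ⊗ φ` on `X ⊗ A`,
and `V(β(a) (1 ⊗ x)) = (1 ⊗ a) α(x)`. So if `φ_X(y x) = 0` for all `y`, then
`(id ⊗ φ)((1 ⊗ a) α(x)) = 0` for all `a`; faithfulness of `φ` forces `α(x) = 0`, and the counit
gives `x = 0`. The other side is the same argument with the second Galois map
`V'(x ⊗ y) = α(x) (y ⊗ 1)`, for which `V'(β(b)) = 1 ⊗ S(b)`: this is where the bijectivity of the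
antipode enters.
-/

open LinearMap

section Contraction

variable {k : Type*} [Field k] {M N P : Type*} [AddCommGroup M] [Module k M]
  [AddCommGroup N] [Module k N] [AddCommGroup P] [Module k P]

@[simp] lemma applySnd_tmul (g : N →ₗ[k] k) (m : M) (n : N) :
    applySnd k g (m ⊗ₜ n) = g n • m := by
  simp [applySnd]

@[simp] lemma applyFst_tmul (f : M →ₗ[k] k) (m : M) (n : N) :
    applyFst k f (m ⊗ₜ n) = f m • n := by
  simp [applyFst]

@[simp] lemma applySnd_zero : applySnd k (0 : N →ₗ[k] k) = (0 : M ⊗[k] N →ₗ[k] M) := by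
  simp [applySnd]

@[simp] lemma applyFst_zero : applyFst k (0 : M →ₗ[k] k) = (0 : M ⊗[k] N →ₗ[k] N) := by
  simp [applyFst]

lemma apply_applySnd (f : M →ₗ[k] k) (g : N →ₗ[k] k) (t : M ⊗[k] N) :
    f (applySnd k g t) = g (applyFst k f t) := by
  induction t using TensorProduct.induction_on with
  | zero => simp
  | tmul m n => simp [mul_comm]
  | add s t hs ht => simp [hs, ht]

lemma applySnd_lTensor (g : N →ₗ[k] k) (h : P →ₗ[k] N) (t : M ⊗[k] P) :
    applySnd k g (lTensor M h t) = applySnd k (g ∘ₗ h) t := by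
  induction t using TensorProduct.induction_on with
  | zero => simp
  | tmul m p => simp
  | add s t hs ht => simp [hs, ht]

lemma applySnd_rTensor (g : N →ₗ[k] k) (f : M →ₗ[k] P) (t : M ⊗[k] N) :
    applySnd k g (rTensor N f t) = f (applySnd k g t) := by
  induction t using TensorProduct.induction_on with
  | zero => simp
  | tmul m n => simp
  | add s t hs ht => simp [hs, ht]

lemma lTensor_smulRight (g : N →ₗ[k] k) (p : P) (t : M ⊗[k] N) :
    lTensor M (g.smulRight p) t = applySnd k g t ⊗ₜ p := by
  induction t using TensorProduct.induction_on with
  | zero => simp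
  | tmul m n => simp [smul_tmul]
  | add s t hs ht => simp [hs, ht, add_tmul]

lemma rTensor_smulRight (f : M →ₗ[k] k) (p : P) (t : M ⊗[k] N) :
    rTensor N (f.smulRight p) t = p ⊗ₜ applyFst k f t := by
  induction t using TensorProduct.induction_on with
  | zero => simp
  | tmul m n => simp [smul_tmul]
  | add s t hs ht => simp [hs, ht, tmul_add]

lemma lTensor_applySnd_assoc (g : P →ₗ[k] k) (w : (M ⊗[k] N) ⊗[k] P) :
    lTensor M (applySnd k g) (TensorProduct.assoc k M N P w) = applySnd k g w := by
  induction w using TensorProduct.induction_on with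
  | zero => simp
  | tmul s p =>
    induction s using TensorProduct.induction_on with
    | zero => simp
    | tmul m n => simp [tmul_smul]
    | add s t hs ht => simp [add_tmul, hs, ht]
  | add v w hv hw => simp [hv, hw]

lemma lTensor_applyFst_assoc (f : N →ₗ[k] k) (w : (M ⊗[k] N) ⊗[k] P) :
    lTensor M (applyFst k f) (TensorProduct.assoc k M N P w) = rTensor P (applySnd k f) w := by
  induction w using TensorProduct.induction_on with
  | zero => simp
  | tmul s p =>
    induction s using TensorProduct.induction_on with
    | zero => simp
    | tmul m n => simp [tmul_smul, smul_tmul]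
    | add s t hs ht => simp [add_tmul, hs, ht]
  | add v w hv hw => simp [hv, hw]

lemma eq_zero_of_forall_applyFst_eq_zero (t : M ⊗[k] N)
    (h : ∀ f : M →ₗ[k] k, applyFst k f t = 0) : t = 0 := by
  classical
  let b := Module.Basis.ofVectorSpace k M
  apply (equivFinsuppOfBasisLeft b).injective
  ext i
  rw [equivFinsuppOfBasisLeft_apply]
  exact h (b.coord i)

lemma eq_zero_of_forall_applySnd_eq_zero {ι : Type*} (g : ι → N →ₗ[k] k)
    (hg : ∀ n, (∀ i, g i n = 0) → n = 0) (t : M ⊗[k] N)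
    (h : ∀ i, applySnd k (g i) t = 0) : t = 0 :=
  eq_zero_of_forall_applyFst_eq_zero t fun f ↦ hg _ fun i ↦ by
    rw [← apply_applySnd, h, map_zero]

end Contraction

section Multiplication

variable {k : Type*} [Field k] {B A : Type*} [Ring B] [Algebra k B] [Ring A] [Algebra k A]

open Algebra.TensorProduct in
lemma applySnd_tmul_one_mul (g : A →ₗ[k] k) (b : B) (t : B ⊗[k] A) :
    applySnd k g ((b ⊗ₜ 1) * t) = b * applySnd k g t := by
  induction t using TensorProduct.induction_on with
  | zero => simp
  | tmul c a => simp [tmul_mul_tmul]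
  | add s t hs ht => simp [mul_add, hs, ht]

open Algebra.TensorProduct in
lemma applySnd_mul_tmul_one (g : A →ₗ[k] k) (b : B) (t : B ⊗[k] A) :
    applySnd k g (t * (b ⊗ₜ 1)) = applySnd k g t * b := by
  induction t using TensorProduct.induction_on with
  | zero => simp
  | tmul c a => simp [tmul_mul_tmul]
  | add s t hs ht => simp [add_mul, hs, ht]

open Algebra.TensorProduct in
lemma applySnd_one_tmul_mul (g : A →ₗ[k] k) (a : A) (t : B ⊗[k] A) :
    applySnd k g ((1 ⊗ₜ a) * t) = applySnd k (g ∘ₗ mulLeft k a) t := by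
  induction t using TensorProduct.induction_on with
  | zero => simp
  | tmul c a => simp [tmul_mul_tmul]
  | add s t hs ht => simp [mul_add, hs, ht]

open Algebra.TensorProduct in
lemma applySnd_mul_one_tmul (g : A →ₗ[k] k) (a : A) (t : B ⊗[k] A) :
    applySnd k g (t * (1 ⊗ₜ a)) = applySnd k (g ∘ₗ mulRight k a) t := by
  induction t using TensorProduct.induction_on with
  | zero => simp
  | tmul c a => simp [tmul_mul_tmul]
  | add s t hs ht => simp [add_mul, hs, ht]

open Algebra.TensorProduct in
lemma applyFst_tmul_one_mul (f : B →ₗ[k] k) (b : B) (t : B ⊗[k] A) :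
    applyFst k f ((b ⊗ₜ 1) * t) = applyFst k (f ∘ₗ mulLeft k b) t := by
  induction t using TensorProduct.induction_on with
  | zero => simp
  | tmul c a => simp [tmul_mul_tmul]
  | add s t hs ht => simp [mul_add, hs, ht]

end Multiplication

section Antipode

variable {k : Type*} [CommRing k] {X A : Type*} [Ring X] [Algebra k X] [Ring A] [HopfAlgebra k A]

variable (k X A) in
def antipodeContract : (X ⊗[k] A) ⊗[k] A →ₗ[k] X ⊗[k] A :=
  TensorProduct.lift <|
    (LinearMap.mul k (X ⊗[k] A)).compl₂ (TensorProduct.mk k X A 1 ∘ₗ HopfAlgebra.antipode k)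

@[simp] lemma antipodeContract_tmul (t : X ⊗[k] A) (b : A) :
    antipodeContract k X A (t ⊗ₜ b) = t * (1 ⊗ₜ HopfAlgebra.antipode k b) := by
  simp [antipodeContract]

lemma antipodeContract_tmul_one_mul (s : X ⊗[k] A) (w : (X ⊗[k] A) ⊗[k] A) :
    antipodeContract k X A ((s ⊗ₜ 1) * w) = s * antipodeContract k X A w := by
  induction w using TensorProduct.induction_on with
  | zero => simp
  | tmul t b => simp [Algebra.TensorProduct.tmul_mul_tmul, mul_assoc]
  | add v w hv hw => simp [mul_add, hv, hw]

lemma antipodeContract_assoc_symm_lTensor_comul (t : X ⊗[k] A) :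
    antipodeContract k X A ((TensorProduct.assoc k X A A).symm
      (lTensor X (Coalgebra.comul (R := k)) t))
      = lTensor X (Algebra.linearMap k A ∘ₗ Coalgebra.counit) t := by
  have contract_assoc_symm : antipodeContract k X A ∘ₗ (TensorProduct.assoc k X A A).symm
      = lTensor X (LinearMap.mul' k A ∘ₗ lTensor A (HopfAlgebra.antipode k)) := by
    refine TensorProduct.ext_threefold' fun x a b ↦ ?_
    simp [Algebra.TensorProduct.tmul_mul_tmul]
  rw [← HopfAlgebra.mul_antipode_lTensor_comul, ← comp_assoc, lTensor_comp,
    ← contract_assoc_symm]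
  rfl

end Antipode

namespace GaloisContext

variable {k : Type*} [Field k] {A X : Type*} [Ring A] [HopfAlgebra k A] [Ring X] [Algebra k X]
  (G : GaloisContext k A X)

lemma galoisV_tmul (x y : X) : galoisV k A X G.α (x ⊗ₜ y) = (x ⊗ₜ 1) * G.α y := by
  simp [galoisV]

lemma galoisV_β (a : A) : galoisV k A X G.α (G.β a) = 1 ⊗ₜ a :=
  G.V.apply_symm_apply (1 ⊗ₜ a)

lemma galoisV_mul_one_tmul (s : X ⊗[k] X) (x : X) :
    galoisV k A X G.α (s * (1 ⊗ₜ x)) = galoisV k A X G.α s * G.α x := by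
  induction s using TensorProduct.induction_on with
  | zero => simp
  | tmul u v => simp [galoisV_tmul, Algebra.TensorProduct.tmul_mul_tmul, mul_assoc]
  | add s t hs ht => simp [add_mul, hs, ht]

/-- The second Galois map `x ⊗ y ↦ α(x) (y ⊗ 1)`. -/
def galoisV' : X ⊗[k] X →ₗ[k] X ⊗[k] A :=
  LinearMap.mul' k (X ⊗[k] A) ∘ₗ TensorProduct.map G.α.toLinearMap ((TensorProduct.mk k X A).flip 1)

lemma galoisV'_tmul (x y : X) : G.galoisV' (x ⊗ₜ y) = G.α x * (y ⊗ₜ 1) := by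
  simp [galoisV']

lemma galoisV'_tmul_one_mul (x : X) (s : X ⊗[k] X) :
    G.galoisV' ((x ⊗ₜ 1) * s) = G.α x * G.galoisV' s := by
  induction s using TensorProduct.induction_on with
  | zero => simp
  | tmul u v => simp [galoisV'_tmul, Algebra.TensorProduct.tmul_mul_tmul, mul_assoc]
  | add s t hs ht => simp [mul_add, hs, ht]

lemma galoisV'_eq_antipodeContract (s : X ⊗[k] X) :
    G.galoisV' s = antipodeContract k X A
      (Algebra.TensorProduct.map G.α (AlgHom.id k A) (galoisV k A X G.α s)) := by
  induction s using TensorProduct.induction_on with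
  | zero => simp
  | tmul x y =>
    have coassoc_symm : Algebra.TensorProduct.map G.α (AlgHom.id k A) (G.α y)
        = (TensorProduct.assoc k X A A).symm (lTensor X (Coalgebra.comul (R := k)) (G.α y)) := by
      rw [← G.coassoc y, LinearEquiv.symm_apply_apply]
      rfl
    have unit_counit : Algebra.linearMap k A ∘ₗ Coalgebra.counit
        = (Coalgebra.counit (R := k) (A := A)).smulRight 1 := by
      ext a
      simp [Algebra.algebraMap_eq_smul_one]
    rw [galoisV_tmul, map_mul, coassoc_symm, Algebra.TensorProduct.map_tmul, map_one,
      antipodeContract_tmul_one_mul, antipodeContract_assoc_symm_lTensor_comul, unit_counit,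
      lTensor_smulRight, G.counit_id, galoisV'_tmul]
  | add s t hs ht => simp [hs, ht]

lemma galoisV'_β (a : A) : G.galoisV' (G.β a) = 1 ⊗ₜ HopfAlgebra.antipode k a := by
  simp [galoisV'_eq_antipodeContract, galoisV_β, Algebra.TensorProduct.one_def]

lemma α_applySnd_α (ψ : A →ₗ[k] k) (x : X) :
    G.α (applySnd k ψ (G.α x)) = lTensor X (applySnd k ψ ∘ₗ Coalgebra.comul) (G.α x) := by
  have := congrArg (lTensor X (applySnd k ψ)) (G.coassoc x)
  rwa [lTensor_applySnd_assoc, applySnd_rTensor, ← lTensor_comp_apply] at this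

lemma rTensor_applySnd_α (ψ : A →ₗ[k] k) (x : X) :
    rTensor A (applySnd k ψ ∘ₗ G.α.toLinearMap) (G.α x)
      = lTensor X (applyFst k ψ ∘ₗ Coalgebra.comul) (G.α x) := by
  have := congrArg (lTensor X (applyFst k ψ)) (G.coassoc x)
  rwa [lTensor_applyFst_assoc, ← rTensor_comp_apply, ← lTensor_comp_apply] at this

lemma α_applySnd_φ_α (x : X) :
    G.α (applySnd k G.φ (G.α x)) = applySnd k G.φ (G.α x) ⊗ₜ 1 := by
  have integral : applySnd k G.φ ∘ₗ Coalgebra.comul = G.φ.smulRight 1 :=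
    LinearMap.ext G.φ_integral
  rw [α_applySnd_α, integral, lTensor_smulRight]

lemma eq_zero_of_α_eq_zero {x : X} (hx : G.α x = 0) : x = 0 := by
  rw [← G.counit_id x, hx, map_zero]

def IsInducedIntegral (φX : X →ₗ[k] k) : Prop :=
  ∀ x : X, applySnd k G.φ (G.α x) = φX x • (1 : X)

lemma exists_isInducedIntegral [Nontrivial X] : ∃ φX : X →ₗ[k] k, G.IsInducedIntegral φX := by
  obtain ⟨f, hf⟩ := Module.Projective.exists_dual_eq_one k (one_ne_zero : (1 : X) ≠ 0)
  refine ⟨f ∘ₗ applySnd k G.φ ∘ₗ G.α.toLinearMap, fun x ↦ ?_⟩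
  obtain ⟨c, hc⟩ := G.coinv_trivial _ (G.α_applySnd_φ_α x)
  simp [hc, hf]

namespace IsInducedIntegral

variable {G} {φX : X →ₗ[k] k} (hφX : G.IsInducedIntegral φX)
include hφX

lemma applySnd_galoisV (s : X ⊗[k] X) :
    applySnd k G.φ (galoisV k A X G.α s) = applySnd k φX s := by
  induction s using TensorProduct.induction_on with
  | zero => simp
  | tmul x y => simp [galoisV_tmul, applySnd_tmul_one_mul, hφX y]
  | add s t hs ht => simp [hs, ht]

lemma applySnd_galoisV' (s : X ⊗[k] X) :
    applySnd k G.φ (G.galoisV' s) = applyFst k φX s := by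
  induction s using TensorProduct.induction_on with
  | zero => simp
  | tmul x y => simp [galoisV'_tmul, applySnd_mul_tmul_one, hφX x]
  | add s t hs ht => simp [hs, ht]

lemma faithful_right (x : X) (hx : ∀ y : X, φX (y * x) = 0) : x = 0 := by
  have hx' : φX ∘ₗ mulRight k x = 0 := LinearMap.ext hx
  refine G.eq_zero_of_α_eq_zero <| eq_zero_of_forall_applySnd_eq_zero
    (fun a ↦ G.φ ∘ₗ mulLeft k a) G.φ_faithful_right _ fun a ↦ ?_
  calc applySnd k (G.φ ∘ₗ mulLeft k a) (G.α x)
      = applySnd k G.φ (galoisV k A X G.α (G.β a) * G.α x) := by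
        rw [galoisV_β, applySnd_one_tmul_mul]
    _ = applySnd k (φX ∘ₗ mulRight k x) (G.β a) := by
        rw [← galoisV_mul_one_tmul, hφX.applySnd_galoisV, applySnd_mul_one_tmul]
    _ = 0 := by simp [hx']

lemma faithful_left (x : X) (hx : ∀ y : X, φX (x * y) = 0) : x = 0 := by
  have hx' : φX ∘ₗ mulLeft k x = 0 := LinearMap.ext hx
  refine G.eq_zero_of_α_eq_zero <| eq_zero_of_forall_applySnd_eq_zero
    (fun a ↦ G.φ ∘ₗ mulRight k a) G.φ_faithful_left _ fun a ↦ ?_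
  obtain ⟨b, rfl⟩ := G.antipode_bijective.2 a
  calc applySnd k (G.φ ∘ₗ mulRight k (HopfAlgebra.antipode k b)) (G.α x)
      = applySnd k G.φ (G.α x * G.galoisV' (G.β b)) := by
        rw [galoisV'_β, applySnd_mul_one_tmul]
    _ = applyFst k (φX ∘ₗ mulLeft k x) (G.β b) := by
        rw [← galoisV'_tmul_one_mul, hφX.applySnd_galoisV', applyFst_tmul_one_mul]
    _ = 0 := by simp [hx']

lemma applyFst_α [Nontrivial X] {δ : A}
    (hδ : ∀ a : A, applyFst k G.φ (Coalgebra.comul a) = G.φ a • δ) (x : X) :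
    applyFst k φX (G.α x) = φX x • δ := by
  have hφX' : applySnd k G.φ ∘ₗ G.α.toLinearMap = φX.smulRight 1 := LinearMap.ext hφX
  have hδ' : applyFst k G.φ ∘ₗ Coalgebra.comul = G.φ.smulRight δ := LinearMap.ext hδ
  have key := G.rTensor_applySnd_α G.φ x
  rw [hφX', hδ', rTensor_smulRight, lTensor_smulRight, hφX] at key
  obtain ⟨f, hf⟩ := Module.Projective.exists_dual_eq_one k (one_ne_zero : (1 : X) ≠ 0)
  simpa [hf] using congrArg (applyFst k f) key

end IsInducedIntegral

end GaloisContext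

theorem galois_object_exists_phiX_general
    {k : Type*} [Field k] {A X : Type*} [Ring A] [HopfAlgebra k A]
    [Ring X] [Algebra k X] [Nontrivial X]
    (G : GaloisContext k A X)
    (δ : A)
    (hδ : ∀ a : A, applyFst k G.φ (Coalgebra.comul a) = G.φ a • δ) :
    (∃! φX : X →ₗ[k] k, ∀ x : X, applySnd k G.φ (G.α x) = φX x • (1 : X)) ∧
    (∀ φX : X →ₗ[k] k, (∀ x : X, applySnd k G.φ (G.α x) = φX x • (1 : X)) →
      ((∀ x : X, (∀ y : X, φX (x * y) = 0) → x = 0) ∧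
       (∀ x : X, (∀ y : X, φX (y * x) = 0) → x = 0) ∧
       (∀ x : X, applyFst k φX (G.α x) = φX x • δ))) := by
  obtain ⟨φX, hφX⟩ := G.exists_isInducedIntegral
  refine ⟨⟨φX, hφX, fun ψ hψ ↦ LinearMap.ext fun x ↦ ?_⟩, fun φX hφX ↦ ?_⟩
  · exact smul_left_injective k one_ne_zero ((hψ x).symm.trans (hφX x))
  · have hφX : G.IsInducedIntegral φX := hφX
    exact ⟨hφX.faithful_left, hφX.faithful_right, hφX.applyFst_α hδ⟩

theorem galois_object_exists_phiX
    {k : Type*} [Field k] {A X : Type*} [Ring A] [HopfAlgebra k A]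
    [Ring X] [Algebra k X] [Nontrivial X]
    (G : GaloisContext k A X)
    (δ : A) (hδ_unit : IsUnit δ)
    (hδ : ∀ a : A, applyFst k G.φ (Coalgebra.comul a) = G.φ a • δ) :
    (∃! φX : X →ₗ[k] k, ∀ x : X, applySnd k G.φ (G.α x) = φX x • (1 : X)) ∧
    (∀ φX : X →ₗ[k] k, (∀ x : X, applySnd k G.φ (G.α x) = φX x • (1 : X)) →
      ((∀ x : X, (∀ y : X, φX (x * y) = 0) → x = 0) ∧
       (∀ x : X, (∀ y : X, φX (y * x) = 0) → x = 0) ∧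
       (∀ x : X, applyFst k φX (G.α x) = φX x • δ))) :=
  galois_object_exists_phiX_general G δ hδ
end

section
/- Let X be a right A-Galois object and ψ_X a nonzero invariant functional on X. Then for all x, y ∈ X one has S((ψ_X ⊗ id)((x ⊗ 1)·α(y))) = (ψ_X ⊗ id)(α(x)·(y ⊗ 1)), an equality of elements of A. -/
open TensorProduct

set_option maxHeartbeats 1000000
set_option synthInstance.maxHeartbeats 400000

section Aux

variable {k : Type*} [Field k] {A X : Type*} [Ring A] [HopfAlgebra k A]
  [Ring X] [Algebra k X]

lemma applyFst_tmul_s3 (ψ : X →ₗ[k] k) (v : X) (b : A) :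
    applyFst k ψ (v ⊗ₜ[k] b) = ψ v • b := by
  simp [applyFst]

lemma applySnd_tmul_s3 (ψ : A →ₗ[k] k) (v : X) (b : A) :
    applySnd k ψ (v ⊗ₜ[k] b) = ψ b • v := by
  simp [applySnd]

end Aux

theorem galois_object_antipode_invariant_functional
    {k : Type*} [Field k] {A X : Type*} [Ring A] [HopfAlgebra k A]
    [Ring X] [Algebra k X] [Nontrivial X]
    (G : GaloisContext k A X)
    (ψX : X →ₗ[k] k) (hψX_ne : ψX ≠ 0)
    (hψX : ∀ x : X, applyFst k ψX (G.α x) = ψX x • (1 : A))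
    (x y : X) :
    HopfAlgebra.antipode (R := k) (A := A)
        (applyFst k ψX ((x ⊗ₜ[k] (1 : A)) * G.α y))
      = applyFst k ψX (G.α x * (y ⊗ₜ[k] (1 : A))) := by
  set Sa := HopfAlgebra.antipode (R := k) (A := A) with hSa
  set Φ : X ⊗[k] A →ₗ[k] A := applyFst k ψX with hΦ
  set F : A ⊗[k] A →ₗ[k] A := LinearMap.mul' k A ∘ₗ LinearMap.lTensor A Sa with hF
  have hF_tmul : ∀ a b : A, F (a ⊗ₜ[k] b) = a * Sa b := by
    intro a b; simp [hF]
  have hΦ_tmul : ∀ (v : X) (b : A), Φ (v ⊗ₜ[k] b) = ψX v • b := fun v b =>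
    applyFst_tmul_s3 ψX v b
  -- Φ (t * (1 ⊗ c)) = Φ t * c
  have h1 : ∀ (t : X ⊗[k] A) (c : A), Φ (t * ((1 : X) ⊗ₜ[k] c)) = Φ t * c := by
    intro t c
    induction t using TensorProduct.induction_on with
    | zero => simp
    | tmul v b =>
        rw [Algebra.TensorProduct.tmul_mul_tmul, hΦ_tmul, hΦ_tmul, mul_one,
          smul_mul_assoc]
    | add t₁ t₂ ih₁ ih₂ =>
        simp only [add_mul, map_add]
        rw [ih₁, ih₂]
  -- F (comul a) = ε a • 1
  have h4 : ∀ a : A, F (Coalgebra.comul a) = Coalgebra.counit (R := k) a • (1 : A) := by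
    intro a
    calc F (Coalgebra.comul a)
        = LinearMap.mul' k A ((LinearMap.lTensor A Sa) (Coalgebra.comul a)) := rfl
      _ = algebraMap k A (Coalgebra.counit a) :=
          HopfAlgebra.mul_antipode_lTensor_comul_apply (R := k) (a := a)
      _ = Coalgebra.counit (R := k) a • (1 : A) := Algebra.algebraMap_eq_smul_one _
  -- the auxiliary map Q
  set Q : X ⊗[k] (A ⊗[k] A) →ₗ[k] A ⊗[k] A :=
    LinearMap.rTensor A (Φ ∘ₗ LinearMap.mulLeft k (G.α x)) ∘ₗ
      (TensorProduct.assoc k X A A).symm.toLinearMap with hQ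
  have hQ_assoc : ∀ z : (X ⊗[k] A) ⊗[k] A,
      Q ((TensorProduct.assoc k X A A) z)
        = LinearMap.rTensor A (Φ ∘ₗ LinearMap.mulLeft k (G.α x)) z := by
    intro z
    rw [hQ, LinearMap.comp_apply, LinearEquiv.coe_coe, LinearEquiv.symm_apply_apply]
  have hQ_app : ∀ (u : X) (a b : A),
      Q (u ⊗ₜ[k] (a ⊗ₜ[k] b)) = Φ (G.α x * (u ⊗ₜ[k] a)) ⊗ₜ[k] b := by
    intro u a b
    have h : u ⊗ₜ[k] (a ⊗ₜ[k] b) = (TensorProduct.assoc k X A A) ((u ⊗ₜ[k] a) ⊗ₜ[k] b) := rfl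
    rw [h, hQ_assoc, LinearMap.rTensor_tmul]
    simp only [LinearMap.comp_apply, LinearMap.mulLeft_apply]
  -- F (Q (u ⊗ w)) = Φ (αx * (u ⊗ 1)) * F w
  have hsub : ∀ (u : X) (w : A ⊗[k] A),
      F (Q (u ⊗ₜ[k] w)) = Φ (G.α x * (u ⊗ₜ[k] (1 : A))) * F w := by
    intro u w
    induction w using TensorProduct.induction_on with
    | zero => simp
    | tmul a b =>
        rw [hQ_app, hF_tmul, hF_tmul]
        have h : G.α x * (u ⊗ₜ[k] a) = (G.α x * (u ⊗ₜ[k] (1 : A))) * ((1 : X) ⊗ₜ[k] a) := by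
          rw [mul_assoc, Algebra.TensorProduct.tmul_mul_tmul, mul_one, one_mul]
        rw [h, h1, mul_assoc]
    | add w₁ w₂ ih₁ ih₂ =>
        simp only [tmul_add, map_add, mul_add]
        rw [ih₁, ih₂]
  -- Claim A
  have hA : ∀ t : X ⊗[k] A,
      F (Q ((TensorProduct.assoc k X A A) (LinearMap.rTensor A G.α.toLinearMap t)))
        = Sa (Φ ((x ⊗ₜ[k] (1 : A)) * t)) := by
    intro t
    induction t using TensorProduct.induction_on with
    | zero => simp
    | tmul u a =>
        rw [LinearMap.rTensor_tmul, hQ_assoc, LinearMap.rTensor_tmul]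
        have hcomp : (Φ ∘ₗ LinearMap.mulLeft k (G.α x)) (G.α.toLinearMap u)
            = ψX (x * u) • (1 : A) := by
          simp only [LinearMap.comp_apply, LinearMap.mulLeft_apply]
          show Φ (G.α x * G.α u) = _
          rw [← map_mul]; exact hψX (x * u)
        rw [hcomp, ← smul_tmul', map_smul, hF_tmul, one_mul,
          Algebra.TensorProduct.tmul_mul_tmul, one_mul, hΦ_tmul, map_smul]
    | add t₁ t₂ ih₁ ih₂ =>
        simp only [map_add, mul_add]
        rw [ih₁, ih₂]
  -- Claim B
  have hB : ∀ t : X ⊗[k] A,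
      F (Q (LinearMap.lTensor X (Coalgebra.comul (R := k) (A := A)) t))
        = Φ (G.α x * ((applySnd k (Coalgebra.counit (R := k) (A := A)) t) ⊗ₜ[k] (1 : A))) := by
    intro t
    induction t using TensorProduct.induction_on with
    | zero => simp
    | tmul u a =>
        rw [LinearMap.lTensor_tmul, hsub, h4, applySnd_tmul_s3, mul_smul_comm, mul_one,
          ← smul_tmul', mul_smul_comm, map_smul]
    | add t₁ t₂ ih₁ ih₂ =>
        simp only [map_add, add_tmul, mul_add]
        rw [ih₁, ih₂]
  have hfin := hA (G.α y)
  rw [G.coassoc y, hB (G.α y), G.counit_id y] at hfin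
  exact hfin.symm
end

section
/- Let X be a right A-Galois object, ψ_X a nonzero invariant functional on X, δ_X the invertible element of X with φ_X(x·δ_X) = ψ_X(x), and σ_X the modular automorphism of φ_X. Then ψ_X is modular with modular automorphism σ'_X given by σ'_X(x) = δ_X·σ_X(x)·δ_X⁻¹, i.e. ψ_X(y·σ'_X(x)) = ψ_X(x·y) for all x, y ∈ X. -/
open TensorProduct

theorem galois_object_psiX_modular_automorphism
    {k : Type*} [Field k] {A X : Type*} [Ring A] [HopfAlgebra k A]
    [Ring X] [Algebra k X] [Nontrivial X]
    (G : GaloisContext k A X)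
    (φX : X →ₗ[k] k)
    (hφX : ∀ x : X, applySnd k G.φ (G.α x) = φX x • (1 : X))
    (ψX : X →ₗ[k] k) (hψX_ne : ψX ≠ 0)
    (hψX : ∀ x : X, applyFst k ψX (G.α x) = ψX x • (1 : A))
    (δX : Xˣ) (hδX : ∀ x : X, φX (x * δX) = ψX x)
    (σX : X ≃ₐ[k] X) (hσX : ∀ x y : X, φX (y * σX x) = φX (x * y)) :
    ∀ x y : X, ψX (y * (↑δX * σX x * ↑δX⁻¹)) = ψX (x * y) := by
  intro x y
  rw [← hδX, ← hδX]
  have h1 : y * (↑δX * σX x * ↑δX⁻¹) * ↑δX = (y * ↑δX) * σX x := by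
    rw [mul_assoc, mul_assoc, mul_assoc, Units.inv_mul, mul_one, ← mul_assoc]
  rw [h1, hσX, mul_assoc]
end

section
/- Let k be a field, n > 1 and m ≥ 1 natural numbers, λ ∈ k a primitive n-th root of unity, and μ ∈ k. Let V be the free k-vector space with basis {e_{p,q} : p ∈ ℤ, 0 ≤ q < n}, and define linear maps x', y' : V → V by x'·e_{p,q} = e_{p+1,q} for all p, q; y'·e_{p,q} = λ^{-p}·e_{p,q+1} for 0 ≤ q < n−1; and y'·e_{p,n−1} = μ·λ^{-p}·e_{p+nm,0}. Then x' is a bijection, x' ∘ y' = λ·(y' ∘ x'), and (y')^n = μ·(x')^{mn}. (In particular, the unital k-algebra X^{n,m}_{λ,μ} generated by x, x⁻¹, y subject to x·x⁻¹ = x⁻¹·x = 1, xy = λyx and yⁿ = μx^{mn} admits a nontrivial representation, hence is a nontrivial algebra.) -/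
noncomputable section

variable {k : Type*} [Field k]

/-- The shift operator `x'` on the free vector space with basis `e_{p,q}`,
`p ∈ ℤ`, `0 ≤ q < n`, given by `x' e_{p,q} = e_{p+1,q}`. -/
def xOp (n : ℕ) : ((ℤ × Fin n) →₀ k) →ₗ[k] ((ℤ × Fin n) →₀ k) :=
  Finsupp.lmapDomain k k (fun pq => (pq.1 + 1, pq.2))

/-- The operator `y'` given by `y' e_{p,q} = λ⁻ᵖ e_{p,q+1}` for `q < n-1` and
`y' e_{p,n-1} = μ λ⁻ᵖ e_{p+nm,0}`. -/
def yOp (n m : ℕ) (hn : 1 < n) (lam mu : k) :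
    ((ℤ × Fin n) →₀ k) →ₗ[k] ((ℤ × Fin n) →₀ k) :=
  Finsupp.lift _ k _ (fun pq =>
    if _h : (pq.2 : ℕ) < n - 1 then
      lam ^ (-pq.1) • Finsupp.single (pq.1, ⟨(pq.2 : ℕ) + 1, by omega⟩) (1 : k)
    else
      (mu * lam ^ (-pq.1)) •
        Finsupp.single (pq.1 + (n : ℤ) * (m : ℤ), ⟨0, by omega⟩) (1 : k))

lemma xOp_single (n : ℕ) (p : ℤ) (q : Fin n) (c : k) :
    xOp n (Finsupp.single (p,q) c) = Finsupp.single (p+1,q) c := by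
  simp [xOp, Finsupp.mapDomain_single]

lemma xOp_pow_single (n : ℕ) (j : ℕ) (p : ℤ) (q : Fin n) (c : k) :
    ((xOp (k:=k) n)^j) (Finsupp.single (p,q) c) = Finsupp.single (p+j,q) c := by
  induction j with
  | zero => simp
  | succ i ih =>
    rw [pow_succ', Module.End.mul_apply, ih, xOp_single]
    congr 2
    push_cast; ring

lemma yOp_single (n m : ℕ) (hn : 1 < n) (lam mu : k) (pq : ℤ × Fin n) (c : k) :
    yOp n m hn lam mu (Finsupp.single pq c) =
    if _h : (pq.2 : ℕ) < n - 1 then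
      Finsupp.single (pq.1, ⟨(pq.2 : ℕ) + 1, by omega⟩) (c * lam ^ (-pq.1))
    else
      Finsupp.single (pq.1 + (n : ℤ) * (m : ℤ), ⟨0, by omega⟩) (c * (mu * lam ^ (-pq.1))) := by
  rw [yOp, Finsupp.lift_apply, Finsupp.sum_single_index (by simp)]
  split <;> rw [smul_smul, Finsupp.smul_single, smul_eq_mul, mul_one]

lemma yOp_pow_step (n m : ℕ) (hn : 1 < n) (lam mu : k) (hlam0 : lam ≠ 0)
    (j : ℕ) (p : ℤ) (q : Fin n) (c : k) (hj : (q : ℕ) + j ≤ n - 1) :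
    ((yOp n m hn lam mu)^j) (Finsupp.single (p,q) c) =
      Finsupp.single (p, ⟨(q:ℕ) + j, by omega⟩) (c * lam ^ (-(p * j))) := by
  induction j generalizing q c with
  | zero => simp
  | succ i ih =>
    rw [pow_succ, Module.End.mul_apply, yOp_single,
      dif_pos (show ((p,q).2 : ℕ) < n - 1 by simp; omega)]
    rw [ih ⟨(q:ℕ)+1, by omega⟩ _ (by simp; omega)]
    congr 1
    · simp [Prod.ext_iff, Fin.ext_iff]; omega
    · rw [mul_assoc, ← zpow_add₀ hlam0]
      congr 1
      push_cast; ring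


theorem xOp_yOp_relations (n m : ℕ) (hn : 1 < n) (hm : 1 ≤ m)
    (lam : k) (hlam : IsPrimitiveRoot lam n) (mu : k) :
    Function.Bijective (xOp (k := k) n) ∧
    (xOp (k := k) n) ∘ₗ yOp n m hn lam mu
      = lam • (yOp n m hn lam mu ∘ₗ xOp (k := k) n) ∧
    (yOp n m hn lam mu) ^ n = mu • (xOp (k := k) n) ^ (m * n) := by
  have hne : lam ≠ 0 := hlam.ne_zero (by omega)
  have h1 : lam ^ (n:ℤ) = 1 := by
    rw [zpow_natCast, hlam.pow_eq_one]
  refine ⟨?_, ?_, ?_⟩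
  · have : ⇑(xOp (k:=k) n) = ⇑((Finsupp.domLCongr (Equiv.prodCongr (Equiv.addRight (1:ℤ)) (Equiv.refl (Fin n))) : ((ℤ × Fin n) →₀ k) ≃ₗ[k] _)) := by
      funext v
      have h : xOp (k:=k) n v = ((Finsupp.domLCongr (Equiv.prodCongr (Equiv.addRight (1:ℤ)) (Equiv.refl (Fin n))) : ((ℤ × Fin n) →₀ k) ≃ₗ[k] _) : _ →ₗ[k] _) v := by
        congr 1
        ext pq c
        simp [xOp, Finsupp.mapDomain_single, Prod.map]
      simpa using h
    rw [this]
    exact (Finsupp.domLCongr _).bijective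
  · refine Finsupp.lhom_ext fun pq c => ?_
    obtain ⟨p, q⟩ := pq
    rw [LinearMap.comp_apply, LinearMap.smul_apply, LinearMap.comp_apply,
      xOp_single, yOp_single, yOp_single]
    have hstep : lam ^ (-p) = lam * lam ^ (-(p+1)) := by
      rw [mul_comm, ← zpow_add_one₀ hne]
      congr 1; ring
    by_cases h : (q:ℕ) < n - 1
    · rw [dif_pos h, dif_pos h, xOp_single, Finsupp.smul_single]
      congr 1
      show c * lam ^ (-p) = lam • (c * lam ^ (-(p+1)))
      rw [smul_eq_mul, hstep]; ring
    · rw [dif_neg h, dif_neg h, xOp_single, Finsupp.smul_single]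
      rw [show p + (n:ℤ)*m + 1 = p + 1 + (n:ℤ)*m by ring]
      congr 1
      show c * (mu * lam ^ (-p)) = lam • (c * (mu * lam ^ (-(p+1))))
      rw [smul_eq_mul, hstep]; ring
  · refine Finsupp.lhom_ext fun pq c => ?_
    obtain ⟨p, q⟩ := pq
    have ha : n = (q:ℕ) + 1 + (n - 1 - (q:ℕ)) := by omega
    set a := n - 1 - (q:ℕ) with hadef
    rw [LinearMap.smul_apply, xOp_pow_single]
    have hpow : (yOp n m hn lam mu)^n
        = (yOp n m hn lam mu)^(q:ℕ) * (yOp n m hn lam mu)^1 * (yOp n m hn lam mu)^a := by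
      have h' : (yOp n m hn lam mu)^n = (yOp n m hn lam mu)^((q:ℕ)+1+a) := by rw [← ha]
      rw [h', pow_add, pow_add]
    have hlt : (q:ℕ) + a < n := by omega
    have hlt0 : 0 < n := by omega
    have e1 : ((yOp n m hn lam mu)^a) (Finsupp.single (p,q) c)
        = Finsupp.single (p, ⟨(q:ℕ) + a, hlt⟩) (c * lam ^ (-(p * (a:ℤ)))) :=
      yOp_pow_step n m hn lam mu hne a p q c (by omega)
    have e2 : yOp n m hn lam mu
          (Finsupp.single (p, (⟨(q:ℕ) + a, hlt⟩ : Fin n)) (c * lam ^ (-(p * (a:ℤ)))))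
        = Finsupp.single (p + (n:ℤ)*m, (⟨0, hlt0⟩ : Fin n))
            (c * lam ^ (-(p * (a:ℤ))) * (mu * lam ^ (-p))) := by
      rw [yOp_single, dif_neg (show ¬ (((p, (⟨(q:ℕ) + a, hlt⟩ : Fin n)).2 : ℕ) < n - 1) from by
        simp; omega)]
    have e3 : ((yOp n m hn lam mu)^(q:ℕ))
          (Finsupp.single (p + (n:ℤ)*m, (⟨0, hlt0⟩ : Fin n))
            (c * lam ^ (-(p * (a:ℤ))) * (mu * lam ^ (-p))))
        = Finsupp.single (p + (n:ℤ)*m, ⟨((⟨0, hlt0⟩ : Fin n) : ℕ) + (q:ℕ), by simp⟩)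
            (c * lam ^ (-(p * (a:ℤ))) * (mu * lam ^ (-p)) * lam ^ (-((p + (n:ℤ)*m) * ((q:ℕ):ℤ)))) :=
      yOp_pow_step n m hn lam mu hne (q:ℕ) _ _ _ (by simp; omega)
    rw [hpow, Module.End.mul_apply, Module.End.mul_apply, e1, pow_one, e2, e3]
    rw [Finsupp.smul_single]
    have key : lam ^ (-(p * (a:ℤ))) * (mu * lam ^ (-p)) * lam ^ (-((p + (n:ℤ)*m) * ((q:ℕ):ℤ))) = mu := by
      have h2 : lam ^ (-(p*(a:ℤ))) * lam ^ (-p) * lam ^ (-((p+(n:ℤ)*m)*((q:ℕ):ℤ)))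
          = lam ^ ((-(p*(a:ℤ))) + (-p) + (-((p+(n:ℤ)*m)*((q:ℕ):ℤ)))) := by
        rw [zpow_add₀ hne, zpow_add₀ hne]
      have he : -p + (-(p * (a:ℤ)) + -((p + (n:ℤ)*m) * ((q:ℕ):ℤ))) = (n:ℤ) * (-(p + m * (q:ℕ))) := by
        have haz : (a:ℤ) = (n:ℤ) - 1 - (q:ℕ) := by push_cast; omega
        rw [haz]; ring
      calc lam ^ (-(p * (a:ℤ))) * (mu * lam ^ (-p)) * lam ^ (-((p + (n:ℤ)*m) * ((q:ℕ):ℤ)))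
          = mu * (lam ^ (-(p*(a:ℤ))) * lam ^ (-p) * lam ^ (-((p+(n:ℤ)*m)*((q:ℕ):ℤ)))) := by ring
        _ = mu * lam ^ ((-(p*(a:ℤ))) + (-p) + (-((p+(n:ℤ)*m)*((q:ℕ):ℤ)))) := by rw [h2]
        _ = mu := by
            rw [show (-(p*(a:ℤ))) + (-p) + (-((p+(n:ℤ)*m)*((q:ℕ):ℤ)))
                = -p + (-(p * (a:ℤ)) + -((p + (n:ℤ)*m) * ((q:ℕ):ℤ))) from by ring,
              he, zpow_mul, h1, one_zpow, mul_one]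
    congr 1
    · refine Prod.ext ?_ ?_
      · simp; push_cast; ring
      · ext; simp
    · rw [smul_eq_mul, mul_assoc, mul_assoc, ← mul_assoc (lam ^ (-(p * (a:ℤ)))), key, mul_comm]
end
end
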